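/- arXiv:1506.06610 — 2 statements merged into one kernel-verified Lean document; each statement's English description precedes it below -/
import Mathlib

section
/- For q = 3 and for every integer q > 6, the inequality √(1/3 − 2/π² − 1/(3q²)) < max{1/q, (q−2)/(2q)} holds. -/
/-! Both cases reduce, after squaring, to a lower bound `1/5 < 2/π²`, i.e. `π² < 10`.
For `q ≥ 7` the maximum is `(q-2)/(2q)` and the squared inequality amounts to
`7q² - 60q + 80 ≥ 0`, whose larger root is just below `7`. -/

open Real

lemma pi_sq_lt_ten : π ^ 2 < 10 := by
  nlinarith [pi_lt_d2, pi_pos]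

lemma one_fifth_lt_two_div_pi_sq : 1 / 5 < 2 / π ^ 2 := by
  rw [div_lt_div_iff₀ (by norm_num) (by positivity)]
  linarith [pi_sq_lt_ten]

lemma max_inv_sub_two_div_eq_right {x : ℝ} (hx : 4 ≤ x) :
    max (1 / x) ((x - 2) / (2 * x)) = (x - 2) / (2 * x) := by
  apply max_eq_right
  rw [div_le_div_iff₀ (by linarith) (by linarith)]
  nlinarith

lemma l2_bound_sq_lt_at_three : 1 / 3 - 2 / π ^ 2 - 1 / (3 * 3 ^ 2) < (1 / 3 : ℝ) ^ 2 := by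
  linarith [one_fifth_lt_two_div_pi_sq]

lemma l2_bound_sq_lt_of_seven_le {x : ℝ} (hx : 7 ≤ x) :
    1 / 3 - 2 / π ^ 2 - 1 / (3 * x ^ 2) < ((x - 2) / (2 * x)) ^ 2 := by
  have hx0 : 0 < x := by linarith
  have hgap : ((x - 2) / (2 * x)) ^ 2 - (1 / 3 - 1 / 5 - 1 / (3 * x ^ 2)) =
      (7 * x ^ 2 - 60 * x + 80) / (60 * x ^ 2) := by
    field_simp
    ring
  have hnum : 0 ≤ 7 * x ^ 2 - 60 * x + 80 := by nlinarith
  have hpoly : 0 ≤ ((x - 2) / (2 * x)) ^ 2 - (1 / 3 - 1 / 5 - 1 / (3 * x ^ 2)) := by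
    rw [hgap]
    positivity
  linarith [one_fifth_lt_two_div_pi_sq]

/-- For `q = 3` and every integer `q > 6`, the `L²` bound `√(1/3 − 2/π² − 1/(3q²))`
is strictly smaller than the `L^∞` centerpoint constant `max {1/q, (q−2)/(2q)}`. -/
theorem l2_lt_linfty (q : ℕ) (hq : q = 3 ∨ 6 < q) :
    Real.sqrt (1 / 3 - 2 / Real.pi ^ 2 - 1 / (3 * (q : ℝ) ^ 2)) <
      max (1 / (q : ℝ)) (((q : ℝ) - 2) / (2 * (q : ℝ))) := by
  rcases hq with rfl | hq
  · push_cast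
    rw [show max (1 / (3 : ℝ)) ((3 - 2) / (2 * 3)) = 1 / 3 by norm_num, sqrt_lt' (by norm_num)]
    exact l2_bound_sq_lt_at_three
  · have hq7 : (7 : ℝ) ≤ q := by exact_mod_cast hq
    rw [max_inv_sub_two_div_eq_right (by linarith), sqrt_lt' (div_pos (by linarith) (by linarith))]
    exact l2_bound_sq_lt_of_seven_le hq7
end

section
/- For any finite absolutely continuous Borel measure μ on ℝ² (with C^∞ density of connected compact support), there exists a regular 6-fan — three concurrent lines with successive angles π/3 — each of whose three lines bisects μ. -/
open MeasureTheory Real RealInnerProductSpace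

open Filter Topology Set Function
open scoped NNReal

/-!
For a finite measure that is absolutely continuous and positive on open sets, every direction
`θ` has a unique bisecting line with normal `unitVec θ`, at offset `τ θ`; uniqueness makes `τ`
continuous and `π`-antiperiodic. Because `e^{2iπ/3} = e^{iπ/3} - 1`, the bisectors in the
directions `θ`, `θ + π/3`, `θ + 2π/3` are concurrent exactly when
`τ (θ + π/3) - τ θ - τ (θ + 2π/3) = 0`, and this antiperiodic function has a zero by the
intermediate value theorem.

A general `μ` is approximated by `μ + ε • ν` with `ν` a finite measure equivalent to Lebesgue
measure. Bisectors of the perturbed measures stay within a fixed distance of the origin, so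
the fans have bounded centres; along a convergent subsequence the half-plane masses converge,
and the limit is a fan for `μ`.
-/

local notation "ℝ²" => EuclideanSpace ℝ (Fin 2)

lemma continuous_of_strictMono_of_apply_eq {X α β : Type*} [TopologicalSpace X] [LinearOrder α]
    [TopologicalSpace α] [OrderTopology α] [LinearOrder β] [TopologicalSpace β]
    [OrderClosedTopology β] {F : X → α → β} {τ : X → α} {c : β}
    (hF : ∀ a, Continuous fun x => F x a) (hmono : ∀ x, StrictMono (F x))
    (hτ : ∀ x, F x (τ x) = c) : Continuous τ := by
  refine continuous_iff_continuousAt.2 fun x₀ => tendsto_order.2 ⟨fun a ha => ?_, fun b hb => ?_⟩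
  · filter_upwards [((hF a).tendsto x₀).eventually_lt_const ((hmono x₀ ha).trans_eq (hτ x₀))]
      with x hx
    exact (hmono x).lt_iff_lt.1 (hx.trans_eq (hτ x).symm)
  · filter_upwards [((hF b).tendsto x₀).eventually_const_lt ((hτ x₀).symm.trans_lt (hmono x₀ hb))]
      with x hx
    exact (hmono x).lt_iff_lt.1 ((hτ x).trans_lt hx)

lemma exists_measureReal_norm_gt_lt {E : Type*} [NormedAddCommGroup E] [MeasurableSpace E]
    [OpensMeasurableSpace E] (μ : Measure E) [IsFiniteMeasure μ] {δ : ℝ} (hδ : 0 < δ) :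
    ∃ R, μ.real {p | R < ‖p‖} < δ := by
  have hanti : Antitone fun R : ℝ => {p : E | R < ‖p‖} := fun a b hab p hp => hab.trans_lt hp
  have hinter : ⋂ R : ℝ, {p : E | R < ‖p‖} = ∅ :=
    eq_empty_of_forall_notMem fun p hp => lt_irrefl ‖p‖ (mem_iInter.1 hp ‖p‖)
  have hlim := tendsto_measure_iInter_atTop (μ := μ)
    (fun R => (isOpen_lt continuous_const continuous_norm).nullMeasurableSet) hanti
    ⟨0, measure_ne_top μ _⟩
  rw [hinter, measure_empty] at hlim
  exact (((ENNReal.tendsto_toReal ENNReal.zero_ne_top).comp hlim).eventually_lt_const hδ).exists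

lemma isOpenPosMeasure_add_smul {X : Type*} [TopologicalSpace X] [MeasurableSpace X]
    (μ g : Measure X) [g.IsOpenPosMeasure] {ε : ℝ≥0} (hε : ε ≠ 0) :
    (μ + ε • g).IsOpenPosMeasure :=
  ⟨fun U hU hne h => by
    rw [Measure.add_apply, Measure.coe_nnreal_smul_apply, add_eq_zero, mul_eq_zero,
      ENNReal.coe_eq_zero] at h
    exact h.2.elim hε (hU.measure_ne_zero g hne)⟩

section HalfSpace

variable {E : Type*} [NormedAddCommGroup E] [InnerProductSpace ℝ E] [MeasurableSpace E]
  {μ : Measure E} {u : E} {t : ℝ}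

def Bisects (μ : Measure E) (u : E) (t : ℝ) : Prop :=
  μ {p | ⟪u, p⟫ ≤ t} = μ univ / 2 ∧ μ {p | t ≤ ⟪u, p⟫} = μ univ / 2

lemma Bisects.neg (h : Bisects μ u t) : Bisects μ (-u) (-t) := by
  simpa only [Bisects, inner_neg_left, neg_le_neg_iff, and_comm] using h

lemma Bisects.measureReal_inner_le (h : Bisects μ u t) :
    μ.real {p | ⟪u, p⟫ ≤ t} = μ.real univ / 2 := by
  rw [measureReal_def, h.1, ENNReal.toReal_div, ENNReal.toReal_ofNat, measureReal_def]

lemma Bisects.measure_le_measure_norm_gt (h : Bisects μ u t) (hu : ‖u‖ ≤ 1) {R : ℝ}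
    (hR : R < |t|) : μ univ / 2 ≤ μ {p | R < ‖p‖} := by
  have hinner : ∀ p : E, |⟪u, p⟫| ≤ ‖p‖ := fun p =>
    (abs_real_inner_le_norm u p).trans (mul_le_of_le_one_left (norm_nonneg p) hu)
  rcases lt_abs.1 hR with hRt | hRt
  · exact h.2 ▸ measure_mono fun p (hp : t ≤ ⟪u, p⟫) =>
      hRt.trans_le (hp.trans ((le_abs_self _).trans (hinner p)))
  · exact h.1 ▸ measure_mono fun p (hp : ⟪u, p⟫ ≤ t) =>
      hRt.trans_le ((neg_le_neg hp).trans ((neg_le_abs _).trans (hinner p)))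

lemma Bisects.abs_le_of_add_smul [IsFiniteMeasure μ] {g : Measure E} [IsFiniteMeasure g]
    {ε : ℝ≥0} (h : Bisects (μ + ε • g) u t) (hu : ‖u‖ ≤ 1) {R : ℝ}
    (hR : μ.real {p | R < ‖p‖} + ε * g.real univ < μ.real univ / 2) : |t| ≤ R := by
  by_contra! hRt
  have hle := ENNReal.toReal_mono (measure_ne_top _ _) (h.measure_le_measure_norm_gt hu hRt)
  rw [ENNReal.toReal_div, ENNReal.toReal_ofNat, ← measureReal_def, ← measureReal_def,
    measureReal_add_apply, measureReal_add_apply, measureReal_nnreal_smul_apply,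
    measureReal_nnreal_smul_apply] at hle
  have hg : (ε : ℝ) * g.real {p | R < ‖p‖} ≤ ε * g.real univ :=
    mul_le_mul_of_nonneg_left (measureReal_mono (subset_univ _)) ε.2
  have hg₀ : 0 ≤ (ε : ℝ) * g.real univ := mul_nonneg ε.2 measureReal_nonneg
  linarith

variable [BorelSpace E]

lemma measurableSet_inner_le (u : E) (t : ℝ) : MeasurableSet {p : E | ⟪u, p⟫ ≤ t} :=
  measurableSet_le (by fun_prop) measurable_const

lemma measurableSet_le_inner (u : E) (t : ℝ) : MeasurableSet {p : E | t ≤ ⟪u, p⟫} :=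
  measurableSet_le measurable_const (by fun_prop)

lemma strictMono_measureReal_inner_le [IsFiniteMeasure μ] [μ.IsOpenPosMeasure] (hu : u ≠ 0) :
    StrictMono fun t => μ.real {p | ⟪u, p⟫ ≤ t} := by
  intro t₁ t₂ ht
  set slab := (fun p : E => ⟪u, p⟫) ⁻¹' Ioo t₁ t₂
  have hslab_open : IsOpen slab := isOpen_Ioo.preimage (by fun_prop)
  have hslab_nonempty : slab.Nonempty := by
    refine ⟨((t₁ + t₂) / 2 / ‖u‖ ^ 2) • u, ?_⟩
    have hu2 : ‖u‖ ^ 2 ≠ 0 := by positivity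
    simp only [slab, mem_preimage, mem_Ioo, real_inner_smul_right, real_inner_self_eq_norm_sq,
      div_mul_cancel₀ _ hu2]
    constructor <;> linarith
  have hdisj : Disjoint {p : E | ⟪u, p⟫ ≤ t₁} slab :=
    disjoint_left.2 fun p hp hslab => hslab.1.not_ge hp
  have hsub : {p : E | ⟪u, p⟫ ≤ t₁} ∪ slab ⊆ {p | ⟪u, p⟫ ≤ t₂} := by
    rintro p (hp | hp)
    exacts [hp.trans ht.le, hp.2.le]
  refine ENNReal.toReal_strict_mono (measure_ne_top μ _) ?_
  calc μ {p | ⟪u, p⟫ ≤ t₁} < μ {p | ⟪u, p⟫ ≤ t₁} + μ slab :=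
        ENNReal.lt_add_right (measure_ne_top μ _) (hslab_open.measure_pos μ hslab_nonempty).ne'
    _ = μ ({p | ⟪u, p⟫ ≤ t₁} ∪ slab) := (measure_union hdisj hslab_open.measurableSet).symm
    _ ≤ μ {p | ⟪u, p⟫ ≤ t₂} := measure_mono hsub

variable [FiniteDimensional ℝ E] {ν : Measure E} [ν.IsAddHaarMeasure]

lemma measure_inner_eq_eq_zero (hμ : μ ≪ ν) (hu : u ≠ 0) (t : ℝ) :
    μ {p | ⟪u, p⟫ = t} = 0 := by
  apply hμ
  set s := (affineSpan ℝ {t}).comap (innerₗ E u).toAffineMap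
  have hs : {p : E | ⟪u, p⟫ = t} = s := by
    ext p
    simp [s, AffineSubspace.coe_comap, AffineSubspace.coe_affineSpan_singleton]
  rw [hs]
  refine Measure.addHaar_affineSubspace ν _ fun htop => hu ?_
  have hmem : {p : E | ⟪u, p⟫ = t} = univ := by rw [hs, htop, AffineSubspace.top_coe]
  have h0 : ⟪u, 0⟫ = t := eq_univ_iff_forall.1 hmem 0
  have hu' : ⟪u, u⟫ = t := eq_univ_iff_forall.1 hmem u
  rwa [← h0, inner_zero_right, inner_self_eq_zero] at hu'

lemma measure_inner_le_add_measure_le_inner (hμ : μ ≪ ν) (hu : u ≠ 0) (t : ℝ) :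
    μ {p | ⟪u, p⟫ ≤ t} + μ {p | t ≤ ⟪u, p⟫} = μ univ := by
  have hunion : {p : E | ⟪u, p⟫ ≤ t} ∪ {p | t ≤ ⟪u, p⟫} = univ :=
    eq_univ_of_forall fun p => le_total ⟪u, p⟫ t
  have hinter : {p : E | ⟪u, p⟫ ≤ t} ∩ {p | t ≤ ⟪u, p⟫} = {p | ⟪u, p⟫ = t} := by
    ext p
    exact (le_antisymm_iff (a := ⟪u, p⟫)).symm
  rw [← measure_union_add_inter _ (measurableSet_le_inner u t), hunion, hinter,
    measure_inner_eq_eq_zero hμ hu, add_zero]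

lemma bisects_of_measure_inner_le [IsFiniteMeasure μ] (hμ : μ ≪ ν) (hu : u ≠ 0)
    (h : μ {p | ⟪u, p⟫ ≤ t} = μ univ / 2) : Bisects μ u t := by
  refine ⟨h, (ENNReal.add_right_inj (a := μ univ / 2) ?_).1 ?_⟩
  · exact ENNReal.div_ne_top (measure_ne_top μ _) two_ne_zero
  · rw [← h, measure_inner_le_add_measure_le_inner hμ hu, h, ENNReal.add_halves]

lemma bisects_iff_measureReal [IsFiniteMeasure μ] (hμ : μ ≪ ν) (hu : u ≠ 0) :
    Bisects μ u t ↔ μ.real {p | ⟪u, p⟫ ≤ t} = μ.real univ / 2 := by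
  refine ⟨Bisects.measureReal_inner_le, fun h => bisects_of_measure_inner_le hμ hu ?_⟩
  rwa [measureReal_def, measureReal_def, ← ENNReal.toReal_ofNat 2, ← ENNReal.toReal_div,
      ENNReal.toReal_eq_toReal_iff' (measure_ne_top μ _)
        (ENNReal.div_ne_top (measure_ne_top μ _) two_ne_zero)] at h

lemma tendsto_measure_inner_le {ι : Type*} {l : Filter ι} [l.IsCountablyGenerated]
    [IsFiniteMeasure μ] (hμ : μ ≪ ν) {us : ι → E} {ts : ι → ℝ} (hu : u ≠ 0)
    (hus : Tendsto us l (𝓝 u)) (hts : Tendsto ts l (𝓝 t)) :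
    Tendsto (fun i => μ {p | ⟪us i, p⟫ ≤ ts i}) l (𝓝 (μ {p | ⟪u, p⟫ ≤ t})) := by
  refine tendsto_measure_of_ae_tendsto_indicator_of_isFiniteMeasure l
    (measurableSet_inner_le u t) (fun i => measurableSet_inner_le _ _) ?_
  have hoff : ∀ᵐ p ∂μ, ⟪u, p⟫ ≠ t := by
    simpa only [ae_iff, not_not] using measure_inner_eq_eq_zero hμ hu t
  filter_upwards [hoff] with p hp
  have hlim : Tendsto (fun i => ⟪us i, p⟫ - ts i) l (𝓝 (⟪u, p⟫ - t)) :=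
    (hus.inner tendsto_const_nhds).sub hts
  -- off the limiting hyperplane, membership in the half-spaces is eventually constant
  rcases (sub_ne_zero.2 hp).lt_or_gt with hneg | hpos
  · filter_upwards [hlim.eventually_lt_const hneg] with i hi
    exact iff_of_true (sub_nonpos.1 hi.le) (sub_nonpos.1 hneg.le)
  · filter_upwards [hlim.eventually_const_lt hpos] with i hi
    exact iff_of_false (fun h => (sub_nonpos.2 h).not_gt hi) fun h => (sub_nonpos.2 h).not_gt hpos

lemma continuous_measureReal_inner_le [IsFiniteMeasure μ] (hμ : μ ≪ ν) {X : Type*}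
    [TopologicalSpace X] [FirstCountableTopology X] {f : X → E} {g : X → ℝ} (hf : Continuous f)
    (hg : Continuous g) (hf₀ : ∀ x, f x ≠ 0) :
    Continuous fun x => μ.real {p | ⟪f x, p⟫ ≤ g x} :=
  continuous_iff_continuousAt.2 fun x => (ENNReal.tendsto_toReal (measure_ne_top μ _)).comp
    (tendsto_measure_inner_le hμ (hf₀ x) (hf.tendsto x) (hg.tendsto x))

lemma exists_bisects [IsFiniteMeasure μ] (hμ : μ ≪ ν) (hu : u ≠ 0) : ∃ t, Bisects μ u t := by
  simp only [bisects_iff_measureReal hμ hu]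
  have hmono : Monotone fun t => {p : E | ⟪u, p⟫ ≤ t} := fun a b hab p hp => le_trans hp hab
  have hunion : ⋃ t : ℝ, {p : E | ⟪u, p⟫ ≤ t} = univ :=
    eq_univ_of_forall fun p => mem_iUnion.2 ⟨⟪u, p⟫, le_refl ⟪u, p⟫⟩
  have hinter : ⋂ t : ℝ, {p : E | ⟪u, p⟫ ≤ t} = ∅ :=
    eq_empty_of_forall_notMem fun p hp =>
      (show ⟪u, p⟫ ≤ ⟪u, p⟫ - 1 from mem_iInter.1 hp _).not_gt (sub_one_lt _)
  have htop : Tendsto (fun t => μ.real {p | ⟪u, p⟫ ≤ t}) atTop (𝓝 (μ.real univ)) := by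
    have := tendsto_measure_iUnion_atTop (μ := μ) hmono
    rw [hunion] at this
    exact (ENNReal.tendsto_toReal (measure_ne_top μ _)).comp this
  have hbot : Tendsto (fun t => μ.real {p | ⟪u, p⟫ ≤ t}) atBot (𝓝 0) := by
    have := tendsto_measure_iInter_atBot (μ := μ)
      (fun t => (measurableSet_inner_le u t).nullMeasurableSet) hmono ⟨0, measure_ne_top μ _⟩
    rw [hinter, measure_empty] at this
    exact (ENNReal.tendsto_toReal ENNReal.zero_ne_top).comp this
  refine mem_range_of_exists_le_of_exists_ge
    (continuous_measureReal_inner_le hμ continuous_const continuous_id fun _ => hu) ?_ ?_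
  all_goals rcases (measureReal_nonneg : 0 ≤ μ.real univ).eq_or_lt with h0 | hM
  · exact ⟨0, by rw [← h0, zero_div]; exact (measureReal_mono (subset_univ _)).trans h0.ge⟩
  · exact (hbot.eventually_lt_const (half_pos hM)).exists.imp fun _ => le_of_lt
  · exact ⟨0, by rw [← h0, zero_div]; exact measureReal_nonneg⟩
  · exact (htop.eventually_const_lt (half_lt_self hM)).exists.imp fun _ => le_of_lt

lemma Bisects.unique [IsFiniteMeasure μ] [μ.IsOpenPosMeasure] (hμ : μ ≪ ν) (hu : u ≠ 0)
    {s : ℝ} (ht : Bisects μ u t) (hs : Bisects μ u s) : t = s := by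
  rw [bisects_iff_measureReal hμ hu] at ht hs
  exact (strictMono_measureReal_inner_le hu).injective (ht.trans hs.symm)

lemma Bisects.of_tendsto_add_smul {ι : Type*} {l : Filter ι} [l.NeBot] [l.IsCountablyGenerated]
    [IsFiniteMeasure μ] {g : Measure E} [IsFiniteMeasure g] (hμ : μ ≪ ν) (hu : u ≠ 0)
    {ε : ι → ℝ≥0} {us : ι → E} {ts : ι → ℝ} (hε : Tendsto ε l (𝓝 0))
    (hus : Tendsto us l (𝓝 u)) (hts : Tendsto ts l (𝓝 t))
    (hbis : ∀ᶠ i in l, Bisects (μ + ε i • g) (us i) (ts i)) : Bisects μ u t := by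
  rw [bisects_iff_measureReal hμ hu]
  have hlim : Tendsto (fun i => μ.real {p | ⟪us i, p⟫ ≤ ts i}) l
      (𝓝 (μ.real {p | ⟪u, p⟫ ≤ t})) :=
    (ENNReal.tendsto_toReal (measure_ne_top μ _)).comp (tendsto_measure_inner_le hμ hu hus hts)
  have hclose : ∀ᶠ i in l,
      dist (μ.real {p | ⟪us i, p⟫ ≤ ts i}) (μ.real univ / 2) ≤ ε i * g.real univ := by
    filter_upwards [hbis] with i hi
    have hhalf := hi.measureReal_inner_le
    rw [measureReal_add_apply, measureReal_add_apply, measureReal_nnreal_smul_apply,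
      measureReal_nnreal_smul_apply] at hhalf
    have hg : (ε i : ℝ) * g.real {p | ⟪us i, p⟫ ≤ ts i} ≤ ε i * g.real univ :=
      mul_le_mul_of_nonneg_left (measureReal_mono (subset_univ _)) (ε i).2
    have hg₀ : 0 ≤ (ε i : ℝ) * g.real {p | ⟪us i, p⟫ ≤ ts i} :=
      mul_nonneg (ε i).2 measureReal_nonneg
    rw [Real.dist_eq, abs_sub_le_iff]
    constructor <;> linarith
  have hεg : Tendsto (fun i => (ε i : ℝ) * g.real univ) l (𝓝 0) := by
    simpa using (NNReal.tendsto_coe.2 hε).mul_const (g.real univ)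
  have hhalf : Tendsto (fun i => μ.real {p | ⟪us i, p⟫ ≤ ts i}) l (𝓝 (μ.real univ / 2)) :=
    tendsto_iff_dist_tendsto_zero.2
      (squeeze_zero' (Eventually.of_forall fun _ => dist_nonneg) hclose hεg)
  exact tendsto_nhds_unique hlim hhalf

end HalfSpace

section UnitVec

noncomputable def unitVec (θ : ℝ) : ℝ² :=
  (WithLp.equiv 2 (Fin 2 → ℝ)).symm ![cos θ, sin θ]

lemma inner_unitVec (θ : ℝ) (p : ℝ²) :
    ⟪unitVec θ, p⟫ = cos θ * p 0 + sin θ * p 1 := by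
  simp [unitVec, PiLp.inner_apply, Fin.sum_univ_two, mul_comm]

lemma inner_unitVec_unitVec (a b : ℝ) : ⟪unitVec a, unitVec b⟫ = cos (a - b) := by
  rw [inner_unitVec]
  simp [unitVec, cos_sub]

lemma norm_unitVec (θ : ℝ) : ‖unitVec θ‖ = 1 := by
  rw [norm_eq_sqrt_real_inner, inner_unitVec_unitVec, sub_self, cos_zero, sqrt_one]

lemma unitVec_ne_zero (θ : ℝ) : unitVec θ ≠ 0 :=
  norm_ne_zero_iff.1 (by rw [norm_unitVec]; exact one_ne_zero)

lemma continuous_unitVec : Continuous unitVec :=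
  (PiLp.continuous_toLp 2 _).comp (by fun_prop)

lemma unitVec_add_pi (θ : ℝ) : unitVec (θ + π) = -unitVec θ := by
  ext i; fin_cases i <;> simp [unitVec]

lemma unitVec_add_two_pi_div_three (θ : ℝ) :
    unitVec (θ + 2 * (π / 3)) = unitVec (θ + π / 3) - unitVec θ := by
  have h3 : √3 ^ 2 = 3 := sq_sqrt (by norm_num)
  ext i; fin_cases i
  · simp [unitVec, cos_add, sin_add, two_mul]
    linear_combination (-cos θ / 4) * h3
  · simp [unitVec, cos_add, sin_add, two_mul]
    linear_combination (-sin θ / 4) * h3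

lemma forall_fin_three_angle {P : ℝ → Prop} {θ : ℝ} :
    (∀ k : Fin 3, P (θ + k * (π / 3))) ↔ P θ ∧ P (θ + π / 3) ∧ P (θ + 2 * (π / 3)) := by
  simp [Fin.forall_fin_succ, one_add_one_eq_two]

lemma sum_sq_inner_unitVec (θ : ℝ) (c : ℝ²) :
    ⟪unitVec θ, c⟫ ^ 2 + ⟪unitVec (θ + π / 3), c⟫ ^ 2 + ⟪unitVec (θ + 2 * (π / 3)), c⟫ ^ 2
      = 3 / 2 * ‖c‖ ^ 2 := by
  have h3 : √3 ^ 2 = 3 := sq_sqrt (by norm_num)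
  rw [unitVec_add_two_pi_div_three, inner_sub_left, inner_unitVec, inner_unitVec,
    EuclideanSpace.norm_sq_eq, Fin.sum_univ_two, Real.norm_eq_abs, Real.norm_eq_abs, sq_abs,
    sq_abs, cos_add, sin_add, cos_pi_div_three, sin_pi_div_three]
  linear_combination (cos θ * c 1 - sin θ * c 0) ^ 2 / 2 * h3
    + 3 / 2 * (c 0 ^ 2 + c 1 ^ 2) * sin_sq_add_cos_sq θ

lemma norm_le_of_forall_abs_inner_unitVec_le {θ R : ℝ} {c : ℝ²}
    (h : ∀ k : Fin 3, |⟪unitVec (θ + k * (π / 3)), c⟫| ≤ R) : ‖c‖ ≤ 2 * R := by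
  obtain ⟨h₀, h₁, h₂⟩ := (forall_fin_three_angle (P := fun φ => |⟪unitVec φ, c⟫| ≤ R)).1 h
  have hframe := sum_sq_inner_unitVec θ c
  have hR : 0 ≤ R := (abs_nonneg _).trans h₀
  nlinarith [sq_abs ⟪unitVec θ, c⟫, sq_abs ⟪unitVec (θ + π / 3), c⟫,
    sq_abs ⟪unitVec (θ + 2 * (π / 3)), c⟫, abs_nonneg ⟪unitVec θ, c⟫,
    abs_nonneg ⟪unitVec (θ + π / 3), c⟫, abs_nonneg ⟪unitVec (θ + 2 * (π / 3)), c⟫,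
    norm_nonneg c]

lemma exists_inner_unitVec_eq (θ a b : ℝ) :
    ∃ c, ⟪unitVec θ, c⟫ = a ∧ ⟪unitVec (θ + π / 3), c⟫ = b := by
  refine ⟨(4 / 3 * (a - b / 2)) • unitVec θ + (4 / 3 * (b - a / 2)) • unitVec (θ + π / 3), ?_, ?_⟩
  all_goals
    simp only [inner_add_right, real_inner_smul_right, inner_unitVec_unitVec, sub_self,
      sub_add_cancel_left, add_sub_cancel_left, cos_zero, cos_neg, cos_pi_div_three]
    ring

lemma exists_concurrent_of_antiperiodic {τ : ℝ → ℝ} (hτ : Continuous τ) (hanti : Antiperiodic τ π) :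
    ∃ c, ∃ θ ∈ Icc 0 π, ∀ k : Fin 3, ⟪unitVec (θ + k * (π / 3)), c⟫ = τ (θ + k * (π / 3)) := by
  set g := fun θ => τ (θ + π / 3) - τ θ - τ (θ + 2 * (π / 3))
  have hg : Continuous g := by fun_prop
  have hg_pi : g π = -g 0 := by
    have h₁ := hanti (π / 3)
    have h₂ := hanti (2 * (π / 3))
    have h₀ := hanti 0
    simp only [g, zero_add] at h₀ h₁ h₂ ⊢
    rw [add_comm π, add_comm π, h₁, h₂, h₀]
    ring
  have hmem : (0 : ℝ) ∈ uIcc (g 0) (g π) := by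
    rw [hg_pi, mem_uIcc]
    exact (le_total (g 0) 0).imp (fun h => ⟨h, neg_nonneg.2 h⟩) fun h => ⟨neg_nonpos.2 h, h⟩
  obtain ⟨θ, hθ, hgθ⟩ := intermediate_value_uIcc hg.continuousOn hmem
  rw [uIcc_of_le pi_pos.le] at hθ
  obtain ⟨c, h₀, h₁⟩ := exists_inner_unitVec_eq θ (τ θ) (τ (θ + π / 3))
  refine ⟨c, θ, hθ, (forall_fin_three_angle (P := fun φ => ⟪unitVec φ, c⟫ = τ φ)).2 ⟨h₀, h₁, ?_⟩⟩
  rw [unitVec_add_two_pi_div_three, inner_sub_left, h₀, h₁]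
  linarith [show g θ = 0 from hgθ]

end UnitVec

section Fan

def IsBisectingFan (μ : Measure ℝ²) (c : ℝ²) (θ : ℝ) : Prop :=
  ∀ k : Fin 3, Bisects μ (unitVec (θ + k * (π / 3))) ⟪unitVec (θ + k * (π / 3)), c⟫

variable {μ : Measure ℝ²} [IsFiniteMeasure μ]

theorem exists_isBisectingFan_of_isOpenPosMeasure [μ.IsOpenPosMeasure] (hμ : μ ≪ volume) :
    ∃ c, ∃ θ ∈ Icc 0 π, IsBisectingFan μ c θ := by
  choose τ hτ using fun θ => exists_bisects hμ (unitVec_ne_zero θ)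
  have hτ_cont : Continuous τ :=
    continuous_of_strictMono_of_apply_eq
      (fun _ => continuous_measureReal_inner_le hμ continuous_unitVec continuous_const
        unitVec_ne_zero)
      (fun θ => strictMono_measureReal_inner_le (unitVec_ne_zero θ))
      (fun θ => (hτ θ).measureReal_inner_le)
  have hτ_anti : Antiperiodic τ π := fun θ =>
    (hτ (θ + π)).unique hμ (unitVec_ne_zero _) (by rw [unitVec_add_pi]; exact (hτ θ).neg)
  obtain ⟨c, θ, hθ, hc⟩ := exists_concurrent_of_antiperiodic hτ_cont hτ_anti
  exact ⟨c, θ, hθ, fun k => (hc k).symm ▸ hτ _⟩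

lemma eventually_norm_le_of_isBisectingFan_add_smul {g : Measure ℝ²}
    [IsFiniteMeasure g] (hμ₀ : μ univ ≠ 0) {ε : ℕ → ℝ≥0} (hε : Tendsto ε atTop (𝓝 0))
    {c : ℕ → ℝ²} {θ : ℕ → ℝ}
    (hfan : ∀ n, IsBisectingFan (μ + ε n • g) (c n) (θ n)) :
    ∃ R, ∀ᶠ n in atTop, ‖c n‖ ≤ R := by
  have hM : 0 < μ.real univ / 4 := by
    have := ENNReal.toReal_pos hμ₀ (measure_ne_top μ _)
    positivity
  obtain ⟨R, hR⟩ := exists_measureReal_norm_gt_lt μ hM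
  have hsmall : ∀ᶠ n in atTop, (ε n : ℝ) * g.real univ < μ.real univ / 4 := by
    refine ((NNReal.tendsto_coe.2 hε).mul_const (g.real univ)).eventually_lt_const ?_
    simpa using hM
  refine ⟨2 * R, hsmall.mono fun n hn => norm_le_of_forall_abs_inner_unitVec_le fun k =>
    (hfan n k).abs_le_of_add_smul (norm_unitVec _).le (by linarith)⟩

lemma exists_isBisectingFan_of_tendsto_add_smul {g : Measure ℝ²}
    [IsFiniteMeasure g] (hμ : μ ≪ volume) (hμ₀ : μ univ ≠ 0) {ε : ℕ → ℝ≥0}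
    (hε : Tendsto ε atTop (𝓝 0)) {c : ℕ → ℝ²} {θ : ℕ → ℝ}
    (hθ : ∀ n, θ n ∈ Icc 0 π) (hfan : ∀ n, IsBisectingFan (μ + ε n • g) (c n) (θ n)) :
    ∃ c θ, IsBisectingFan μ c θ := by
  obtain ⟨R, hR⟩ := eventually_norm_le_of_isBisectingFan_add_smul hμ₀ hε hfan
  obtain ⟨⟨θ₀, c₀⟩, -, φ, hφ, hlim⟩ :=
    (isCompact_Icc.prod (isCompact_closedBall 0 R)).tendsto_subseq' (x := fun n => (θ n, c n))
      (hR.mono fun n hn => ⟨hθ n, mem_closedBall_zero_iff.2 hn⟩).frequently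
  refine ⟨c₀, θ₀, fun k => ?_⟩
  have hu : Tendsto (fun j => unitVec (θ (φ j) + k * (π / 3))) atTop
      (𝓝 (unitVec (θ₀ + k * (π / 3)))) :=
    (continuous_unitVec.tendsto _).comp
      (((continuous_fst.tendsto _).comp hlim).add_const _)
  exact Bisects.of_tendsto_add_smul hμ (unitVec_ne_zero _) (hε.comp hφ.tendsto_atTop) hu
    (hu.inner ((continuous_snd.tendsto _).comp hlim)) (Eventually.of_forall fun j => hfan (φ j) k)

end Fan

/-- For any finite absolutely continuous Borel measure on `ℝ²`, there is a regular
`6`-fan — three concurrent lines with successive angles `π/3` — each of whose three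
lines bisects the measure (both closed half-planes of each line carry measure
`μ(ℝ²)/2`).  The lines pass through the common point `c` with unit normals at angles
`θ, θ + π/3, θ + 2π/3`. -/
theorem exists_regular_six_fan_of_bisecting_lines
    (μ : Measure (EuclideanSpace ℝ (Fin 2))) [IsFiniteMeasure μ] (hac : μ ≪ volume) :
    ∃ (c : EuclideanSpace ℝ (Fin 2)) (θ : ℝ), ∀ k : Fin 3,
      μ {p | 0 ≤ ⟪((WithLp.equiv 2 (Fin 2 → ℝ)).symm
            ![Real.cos (θ + k * (π / 3)), Real.sin (θ + k * (π / 3))]), p - c⟫} = μ Set.univ / 2 ∧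
      μ {p | ⟪((WithLp.equiv 2 (Fin 2 → ℝ)).symm
            ![Real.cos (θ + k * (π / 3)), Real.sin (θ + k * (π / 3))]), p - c⟫ ≤ 0} = μ Set.univ / 2 := by
  suffices ∃ c θ, IsBisectingFan μ c θ by
    obtain ⟨c, θ, hfan⟩ := this
    refine ⟨c, θ, fun k => ?_⟩
    simp only [inner_sub_right, sub_nonneg, sub_nonpos]
    exact (hfan k).symm
  by_cases hμ₀ : μ univ = 0
  · refine ⟨0, 0, fun k => ?_⟩
    simp [Bisects, measure_mono_null (subset_univ _) hμ₀]
  set g := (volume : Measure ℝ²).toFinite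
  have : g.IsOpenPosMeasure := (absolutelyContinuous_toFinite _).isOpenPosMeasure
  set ε : ℕ → ℝ≥0 := fun n => 1 / (n + 1)
  have hε : Tendsto ε atTop (𝓝 0) := tendsto_one_div_add_atTop_nhds_zero_nat
  have hac_add : ∀ n, μ + ε n • g ≪ volume := fun n =>
    hac.add_left ((toFinite_absolutelyContinuous _).smul_left _)
  choose c θ hθ hfan using fun n =>
    have := isOpenPosMeasure_add_smul μ g (ε := ε n) (by positivity)
    exists_isBisectingFan_of_isOpenPosMeasure (hac_add n)
  exact exists_isBisectingFan_of_tendsto_add_smul hac hμ₀ hε hθ hfan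
end
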